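/- Let p ≥ 1, ρ > 0, let S ∈ ℝ^{p×p} be symmetric positive semidefinite, and let Θ̂ be a symmetric positive definite p×p matrix that maximizes the GLASSO objective Q_S(Θ) = log det Θ − tr(SΘ) − ρ ∑_{j,k=1}^p |Θ_{jk}| over all symmetric positive definite p×p matrices. Then p · log λ₁(Θ̂) − (ρ/p) · λ₁(Θ̂) ≥ −tr(S) − ρp. -/

import Mathlib

open Matrix

/-- The largest eigenvalue of a real matrix (as the supremum of its set of eigenvalues). -/
noncomputable def maxEig {p : ℕ} (A : Matrix (Fin p) (Fin p) ℝ) : ℝ :=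
  sSup {μ : ℝ | ∃ v : Fin p → ℝ, v ≠ 0 ∧ A.mulVec v = μ • v}

/-- The GLASSO objective `Q_S(Θ) = log det Θ − tr(SΘ) − ρ ∑_{j,k} |Θ_{jk}|`. -/
noncomputable def glassoObj {p : ℕ} (ρ : ℝ) (S Θ : Matrix (Fin p) (Fin p) ℝ) : ℝ :=
  Real.log Θ.det - (S * Θ).trace - ρ * ∑ j, ∑ k, |Θ j k|

/-!
Testing optimality of `Θhat` against the identity gives `-tr S - ρ p = Q_S(1) ≤ Q_S(Θhat)`.
On the other side, writing `λ = λ₁(Θhat)`: `log det Θhat ≤ p log λ` since every eigenvalue is at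
most `λ`; `tr(S Θhat) ≥ 0` since both matrices are positive semidefinite; and by Gershgorin's
theorem `λ ≤ ∑ |Θhat_jk|`. Hence `Q_S(Θhat) ≤ p log λ - ρ λ ≤ p log λ - (ρ / p) λ`.
-/

namespace Matrix

open scoped MatrixOrder ComplexOrder in
theorem PosSemidef.trace_mul_nonneg {𝕜 n : Type*} [RCLike 𝕜] [Fintype n] [DecidableEq n]
    {A B : Matrix n n 𝕜} (hA : A.PosSemidef) (hB : B.PosSemidef) : 0 ≤ (A * B).trace := by
  set R := CFC.sqrt A
  have hR : Rᴴ = R := (nonneg_iff_posSemidef.mp (CFC.sqrt_nonneg A)).isHermitian.eq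
  have hRR : R * R = A := CFC.sqrt_mul_sqrt_self A hA.nonneg
  calc (0 : 𝕜) ≤ (R * B * Rᴴ).trace := (hB.mul_mul_conjTranspose_same R).trace_nonneg
    _ = (A * B).trace := by rw [hR, trace_mul_cycle, hRR]

theorem le_sum_abs_of_mulVec_eq_smul {n : Type*} [Fintype n] [DecidableEq n]
    {A : Matrix n n ℝ} {v : n → ℝ} {μ : ℝ} (hv : v ≠ 0) (h : A *ᵥ v = μ • v) :
    μ ≤ ∑ j, ∑ k, |A j k| := by
  have hμ : Module.End.HasEigenvalue (toLin' A) μ :=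
    Module.End.hasEigenvalue_of_hasEigenvector
      ⟨Module.End.mem_eigenspace_iff.mpr (by rwa [toLin'_apply]), hv⟩
  obtain ⟨k, hk⟩ := eigenvalue_mem_ball hμ
  rw [Metric.mem_closedBall, Real.dist_eq] at hk
  calc μ ≤ |A k k| + ∑ j ∈ Finset.univ.erase k, |A k j| := by
        simp only [Real.norm_eq_abs] at hk
        linarith [abs_le.mp hk, le_abs_self (A k k)]
    _ = ∑ j, |A k j| := Finset.add_sum_erase _ (fun j => |A k j|) (Finset.mem_univ k)
    _ ≤ ∑ j, ∑ k, |A j k| :=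
        Finset.single_le_sum (f := fun i => ∑ j, |A i j|)
          (fun _ _ => Finset.sum_nonneg fun _ _ => abs_nonneg _) (Finset.mem_univ k)

end Matrix

section maxEig

variable {p : ℕ} {A : Matrix (Fin p) (Fin p) ℝ}

theorem maxEig_le_sum_abs (A : Matrix (Fin p) (Fin p) ℝ) : maxEig A ≤ ∑ j, ∑ k, |A j k| :=
  Real.sSup_le (fun _ ⟨_, hv, h⟩ => le_sum_abs_of_mulVec_eq_smul hv h)
    (Finset.sum_nonneg fun _ _ => Finset.sum_nonneg fun _ _ => abs_nonneg _)

theorem le_maxEig_of_mulVec_eq_smul {v : Fin p → ℝ} {μ : ℝ} (hv : v ≠ 0) (h : A *ᵥ v = μ • v) :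
    μ ≤ maxEig A :=
  le_csSup ⟨_, fun _ ⟨_, hv, h⟩ => le_sum_abs_of_mulVec_eq_smul hv h⟩ ⟨v, hv, h⟩

theorem Matrix.IsHermitian.eigenvalues_le_maxEig (hA : A.IsHermitian) (i : Fin p) :
    hA.eigenvalues i ≤ maxEig A :=
  le_maxEig_of_mulVec_eq_smul (by simpa using hA.eigenvectorBasis.toBasis.ne_zero i)
    (hA.mulVec_eigenvectorBasis i)

theorem Matrix.PosDef.maxEig_pos [NeZero p] (hA : A.PosDef) : 0 < maxEig A :=
  (hA.eigenvalues_pos 0).trans_le (hA.isHermitian.eigenvalues_le_maxEig 0)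

theorem Matrix.PosDef.log_det_le_mul_log_maxEig (hA : A.PosDef) :
    Real.log A.det ≤ p * Real.log (maxEig A) := by
  have hpos := hA.eigenvalues_pos
  simp only [hA.isHermitian.det_eq_prod_eigenvalues, RCLike.ofReal_real_eq_id, id_eq]
  rw [Real.log_prod fun i _ => (hpos i).ne']
  calc ∑ i, Real.log (hA.isHermitian.eigenvalues i) ≤ ∑ _i : Fin p, Real.log (maxEig A) :=
        Finset.sum_le_sum fun i _ =>
          Real.log_le_log (hpos i) (hA.isHermitian.eigenvalues_le_maxEig i)
    _ = p * Real.log (maxEig A) := by simp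

end maxEig

section glasso

variable {p : ℕ} (ρ : ℝ) (S : Matrix (Fin p) (Fin p) ℝ)

theorem glassoObj_one : glassoObj ρ S 1 = -S.trace - ρ * p := by
  simp [glassoObj, one_apply, apply_ite abs]

variable {ρ S}

theorem glassoObj_le (hρ : 0 ≤ ρ) (hS : S.PosSemidef) {Θ : Matrix (Fin p) (Fin p) ℝ}
    (hΘ : Θ.PosDef) : glassoObj ρ S Θ ≤ p * Real.log (maxEig Θ) - ρ * maxEig Θ := by
  have htrace := hS.trace_mul_nonneg hΘ.posSemidef
  have hlogdet := hΘ.log_det_le_mul_log_maxEig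
  have hpenalty := mul_le_mul_of_nonneg_left (maxEig_le_sum_abs Θ) hρ
  unfold glassoObj
  linarith

end glasso

theorem glasso_maximizer_lower_bound
    (p : ℕ) (hp : 1 ≤ p) (ρ : ℝ) (hρ : 0 < ρ)
    (S : Matrix (Fin p) (Fin p) ℝ) (hS : S.PosSemidef)
    (Θhat : Matrix (Fin p) (Fin p) ℝ) (hΘ : Θhat.PosDef)
    (hmax : ∀ Θ : Matrix (Fin p) (Fin p) ℝ, Θ.PosDef →
      glassoObj ρ S Θ ≤ glassoObj ρ S Θhat) :
    -S.trace - ρ * p ≤ p * Real.log (maxEig Θhat) - ρ / p * maxEig Θhat := by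
  have : NeZero p := ⟨by omega⟩
  have hρp : ρ / p ≤ ρ := div_le_self hρ.le (by exact_mod_cast hp)
  calc -S.trace - ρ * p = glassoObj ρ S 1 := (glassoObj_one ρ S).symm
    _ ≤ glassoObj ρ S Θhat := hmax 1 .one
    _ ≤ p * Real.log (maxEig Θhat) - ρ * maxEig Θhat := glassoObj_le hρ.le hS hΘ
    _ ≤ p * Real.log (maxEig Θhat) - ρ / p * maxEig Θhat := by
        gcongr
        exact hΘ.maxEig_pos.le
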